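/- arXiv:1311.4599 — 2 statements merged into one kernel-verified Lean document; each statement's English description precedes it below -/
import Mathlib

section
/- Let H be a cointerval d-graph on vertex set contained in {1,…,n}, let I = I_H be its edge ideal with minimal generators ordered lexicographically decreasing, and fix i ≥ 1. Then the map sending a pair (m, α), where m = x_{i_1}⋯x_{i_d} ∈ G(I) with i_1 < ⋯ < i_d (and i_0 := 0) and α ⊆ set(m) with |α| = i−1, to the tuple (σ_1,…,σ_d) with σ_ℓ := {i_ℓ} ∪ {j ∈ α : i_{ℓ−1} < j < i_ℓ} for 1 ≤ ℓ ≤ d, is a bijection from the set of such pairs (m,α) onto the set of cells of X_H of dimension i−1. -/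
open MvPolynomial

/-- The monomial ideal generated by a set of exponent vectors. -/
noncomputable def genIdeal (K : Type*) [Field K] {n : ℕ} (ms : Set (Fin n →₀ ℕ)) :
    Ideal (MvPolynomial (Fin n) K) :=
  Ideal.span ((fun u => MvPolynomial.monomial u (1 : K)) '' ms)

/-- The colon ideal `⟨m_1, …, m_{j-1}⟩ : m_j`. -/
noncomputable def colonJ (K : Type*) [Field K] {n k : ℕ} (m : Fin k → (Fin n →₀ ℕ))
    (j : Fin k) : Ideal (MvPolynomial (Fin n) K) :=
  Submodule.colon (genIdeal K {u | ∃ i : Fin k, i < j ∧ u = m i})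
    (Ideal.span {MvPolynomial.monomial (m j) (1 : K)})

/-- `I` has linear quotients w.r.t. the ordering `m_1,…,m_k` of its generators:
each colon ideal is generated by a subset of the variables. -/
def HasLinearQuotients (K : Type*) [Field K] {n k : ℕ}
    (m : Fin k → (Fin n →₀ ℕ)) : Prop :=
  ∀ j : Fin k, ∃ S : Set (Fin n),
    colonJ K m j = Ideal.span ((fun s => (MvPolynomial.X s : MvPolynomial (Fin n) K)) '' S)

/-- `set(m_j) = {i : x_i ∈ ⟨m_1,…,m_{j-1}⟩ : m_j}`. -/
def mset (K : Type*) [Field K] {n k : ℕ} (m : Fin k → (Fin n →₀ ℕ)) (j : Fin k) :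
    Set (Fin n) :=
  {t | (MvPolynomial.X t : MvPolynomial (Fin n) K) ∈ colonJ K m j}

/-- The `m i` are minimal monomial generators: none divides another. -/
def MinimalGens {n k : ℕ} (m : Fin k → (Fin n →₀ ℕ)) : Prop :=
  ∀ i j : Fin k, m i ≤ m j → i = j

/-- `b` is the decomposition function: for a monomial `u ∈ I`, `b u` is the smallest
index `j` with `u ∈ ⟨m_1,…,m_j⟩`. -/
def IsDecompositionFunction (K : Type*) [Field K] {n k : ℕ}
    (m : Fin k → (Fin n →₀ ℕ)) (b : (Fin n →₀ ℕ) → Fin k) : Prop :=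
  ∀ u : Fin n →₀ ℕ, MvPolynomial.monomial u (1 : K) ∈ genIdeal K (Set.range m) →
    (MvPolynomial.monomial u (1 : K) ∈ genIdeal K {v | ∃ i : Fin k, i ≤ b u ∧ v = m i}) ∧
    (∀ j : Fin k,
      MvPolynomial.monomial u (1 : K) ∈ genIdeal K {v | ∃ i : Fin k, i ≤ j ∧ v = m i} →
      b u ≤ j)

/-- The decomposition function is regular: `set(b(x_t·m)) ⊆ set(m)` for every
generator `m` and every `t ∈ set(m)`. -/
def IsRegularDecomp (K : Type*) [Field K] {n k : ℕ}
    (m : Fin k → (Fin n →₀ ℕ)) (b : (Fin n →₀ ℕ) → Fin k) : Prop :=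
  ∀ j : Fin k, ∀ t ∈ mset K m j,
    mset K m (b (m j + Finsupp.single t 1)) ⊆ mset K m j

/-- The exponent vector of the squarefree monomial `x_{f 0} ⋯ x_{f (d-1)}`. -/
noncomputable def vecOfFin {n d : ℕ} (f : Fin d → Fin n) : Fin n →₀ ℕ :=
  ∑ l : Fin d, Finsupp.single (f l) 1

/-- The exchange property defining cointerval ideals: for every squarefree monomial
`x_{i_1}⋯x_{i_d} ∈ I` (`i_1 < … < i_d`), every `t ≤ d` and all `j_1 < … < j_t` with
`j_s ≤ i_s` and `{j_1,…,j_t} ∩ {i_{t+1},…,i_d} = ∅`, the monomial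
`x_{j_1}⋯x_{j_t}·x_{i_{t+1}}⋯x_{i_d}` also lies in `I`. -/
def CointervalIdeal (K : Type*) [Field K] {n : ℕ} (d : ℕ)
    (I : Ideal (MvPolynomial (Fin n) K)) : Prop :=
  ∀ f : Fin d → Fin n, StrictMono f →
    MvPolynomial.monomial (vecOfFin f) (1 : K) ∈ I →
    ∀ (t : ℕ) (ht : t ≤ d), ∀ g : Fin t → Fin n, StrictMono g →
      (∀ s : Fin t, g s ≤ f (Fin.castLE ht s)) →
      (∀ (s : Fin t) (l : Fin d), t ≤ (l : ℕ) → g s ≠ f l) →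
      MvPolynomial.monomial
          ((∑ s : Fin t, Finsupp.single (g s) 1) +
            ∑ l ∈ Finset.univ.filter (fun l : Fin d => t ≤ (l : ℕ)),
              Finsupp.single (f l) 1) (1 : K) ∈ I

/-- `u >_lex v` for exponent vectors: at the smallest index where they differ, `u` is
larger. -/
def lexGt {n : ℕ} (u v : Fin n →₀ ℕ) : Prop :=
  ∃ i : Fin n, (∀ j : Fin n, j < i → u j = v j) ∧ v i < u i

/-- The generators are listed in lexicographically decreasing order. -/
def LexDec {n k : ℕ} (m : Fin k → (Fin n →₀ ℕ)) : Prop :=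
  ∀ a b : Fin k, a < b → lexGt (m a) (m b)

/-- `u` is the exponent vector of a squarefree monomial of degree `d`. -/
def SqFreeDeg {n : ℕ} (d : ℕ) (u : Fin n →₀ ℕ) : Prop :=
  (∀ a : Fin n, u a ≤ 1) ∧ u.support.card = d

/-- The exponent vector of the squarefree monomial `∏_{v ∈ e} x_v`. -/
noncomputable def vecOfEdge {n : ℕ} (e : Finset (Fin n)) : Fin n →₀ ℕ :=
  ∑ v ∈ e, Finsupp.single v 1

/-- The map `(m, α) ↦ (σ_1,…,σ_d)`, `σ_ℓ := {i_ℓ} ∪ {j ∈ α : i_{ℓ−1} < j < i_ℓ}` where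
`supp(m) = {i_1 < … < i_d}` (and `i_0 = 0`).  Equivalently (0-based `l`): `σ_l` is the
set of `a ∈ supp(m) ∪ α` having exactly `l` elements of `supp(m)` below them. -/
def cellOfPair {n k d : ℕ} (m : Fin k → (Fin n →₀ ℕ))
    (p : Fin k × Finset (Fin n)) (l : Fin d) : Finset (Fin n) :=
  ((m p.1).support ∪ p.2).filter
    (fun a => ((m p.1).support.filter (· < a)).card = (l : ℕ))

/-!
Write `e = {i_1 < ⋯ < i_d}` for the support of a generator `m`. Every `t ∉ e` below `i_d` lies
in `set(m)`: replacing the first vertex of `e` above `t` by `t` gives, by the cointerval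
property, an edge inside `e ∪ {t}` that is lexicographically larger than `e`. Conversely, an
earlier generator dividing `x_t m` is `e` with some larger vertex traded for `t`. So `set(m)` is
the set of gaps of `e`, the non-vertices below `i_d`.

The block `σ_ℓ` consists of the elements of `e ∪ α` having exactly `ℓ - 1` vertices of `e` below
them. Its maximum is `i_ℓ`, so `σ` determines `e`, and `α = ⋃ σ_ℓ \ e`. A transversal of
`σ` lies componentwise below `(i_1, …, i_d)`, hence is an edge by the cointerval property with
`t = d`; conversely the maxima of the blocks of a cell form an edge, which gives surjectivity.
-/

open Finset

section Blocks

variable {V : Type*} [LinearOrder V]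

def numBelow (e : Finset V) (a : V) : ℕ := #(e.filter (· < a))

def gaps (e : Finset V) : Set V := {t | t ∉ e ∧ ∃ s ∈ e, t < s}

def blocks (d : ℕ) (e α : Finset V) (l : Fin d) : Finset V :=
  (e ∪ α).filter (fun a => numBelow e a = l)

variable {d : ℕ} {e α : Finset V} {a b : V}

lemma numBelow_mono (h : a ≤ b) : numBelow e a ≤ numBelow e b :=
  card_le_card fun x hx => by
    simp only [mem_filter] at hx ⊢
    exact ⟨hx.1, hx.2.trans_le h⟩

lemma numBelow_lt_card {s : V} (hs : s ∈ e) (has : a ≤ s) : numBelow e a < #e :=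
  card_lt_card (filter_ssubset.2 ⟨s, hs, not_lt.2 has⟩)

lemma numBelow_image {f : Fin d → V} (hf : StrictMono f) {l : Fin d}
    (hlt : ∀ l' < l, f l' < a) (hle : a ≤ f l) : numBelow (univ.image f) a = l := by
  have : (univ.image f).filter (· < a) = (Iio l).image f := by
    ext x
    simp only [mem_filter, mem_image, mem_univ, true_and, mem_Iio]
    constructor
    · rintro ⟨⟨l', rfl⟩, hl'⟩
      exact ⟨l', lt_of_not_ge fun h => (hle.trans (hf.monotone h)).not_gt hl', rfl⟩
    · rintro ⟨l', hl', rfl⟩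
      exact ⟨⟨l', rfl⟩, hlt l' hl'⟩
  rw [numBelow, this, card_image_of_injective _ hf.injective, Fin.card_Iio]

lemma numBelow_orderEmbOfFin (he : #e = d) (l : Fin d) :
    numBelow e (e.orderEmbOfFin he l) = l := by
  have h := numBelow_image (l := l) (e.orderEmbOfFin he).strictMono
    (fun _ h => (e.orderEmbOfFin he).strictMono h) le_rfl
  rwa [image_orderEmbOfFin_univ] at h

lemma numBelow_lt_numBelow (ha : a ∈ e) (hab : a < b) : numBelow e a < numBelow e b :=
  card_lt_card ⟨fun x hx => by
      simp only [mem_filter] at hx ⊢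
      exact ⟨hx.1, hx.2.trans hab⟩,
    fun hsub => lt_irrefl a (mem_filter.1 (hsub (mem_filter.2 ⟨ha, hab⟩))).2⟩

lemma orderEmbOfFin_lt_iff (he : #e = d) {l : Fin d} :
    e.orderEmbOfFin he l < a ↔ (l : ℕ) < numBelow e a := by
  refine ⟨fun h => ?_, fun h => lt_of_not_ge fun hle => ?_⟩
  · simpa only [numBelow_orderEmbOfFin he] using numBelow_lt_numBelow (orderEmbOfFin_mem e he l) h
  · have := numBelow_mono (e := e) hle
    rw [numBelow_orderEmbOfFin he] at this
    omega

lemma orderEmbOfFin_le_of_filter_subset {A : Finset V} {t : ℕ} (hA : #A = t) (he : #e = d)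
    (htd : t ≤ d) (hsub : ∀ a ∈ A, e.filter (· < a) ⊆ A) (s : Fin t) :
    A.orderEmbOfFin hA s ≤ e.orderEmbOfFin he (Fin.castLE htd s) := by
  refine not_lt.1 fun h => ?_
  have h1 := (orderEmbOfFin_lt_iff he).1 h
  have h2 : numBelow e (A.orderEmbOfFin hA s) ≤ numBelow A (A.orderEmbOfFin hA s) :=
    card_le_card fun x hx => mem_filter.2
      ⟨hsub _ (orderEmbOfFin_mem A hA s) hx, (mem_filter.1 hx).2⟩
  rw [numBelow_orderEmbOfFin hA] at h2
  rw [Fin.val_castLE] at h1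
  omega

variable {l l' : Fin d}

lemma mem_blocks : a ∈ blocks d e α l ↔ a ∈ e ∪ α ∧ numBelow e a = l := mem_filter

lemma lt_of_mem_blocks (hl : l < l') (ha : a ∈ blocks d e α l) (hb : b ∈ blocks d e α l') :
    a < b := by
  by_contra! h
  have := numBelow_mono (e := e) h
  rw [(mem_blocks.1 ha).2, (mem_blocks.1 hb).2] at this
  exact this.not_gt hl

lemma orderEmbOfFin_mem_blocks (he : #e = d) (l : Fin d) :
    e.orderEmbOfFin he l ∈ blocks d e α l :=
  mem_blocks.2 ⟨mem_union_left _ (orderEmbOfFin_mem e he l), numBelow_orderEmbOfFin he l⟩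

lemma le_orderEmbOfFin_of_mem_blocks (he : #e = d) (ha : a ∈ blocks d e α l) :
    a ≤ e.orderEmbOfFin he l :=
  not_lt.1 fun h => ((orderEmbOfFin_lt_iff he).1 h).ne (mem_blocks.1 ha).2.symm

lemma blocks_nonempty (he : #e = d) (l : Fin d) : (blocks d e α l).Nonempty :=
  ⟨_, orderEmbOfFin_mem_blocks he l⟩

lemma biUnion_blocks (he : #e = d) (hα : ↑α ⊆ gaps e) :
    univ.biUnion (blocks d e α) = e ∪ α := by
  ext a
  simp only [mem_biUnion, mem_univ, true_and, mem_blocks]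
  refine ⟨fun ⟨_, ha, _⟩ => ha, fun ha => ?_⟩
  obtain ⟨s, hs, has⟩ : ∃ s ∈ e, a ≤ s := by
    rcases mem_union.1 ha with ha | ha
    · exact ⟨a, ha, le_rfl⟩
    · obtain ⟨-, s, hs, has⟩ := hα ha
      exact ⟨s, hs, has.le⟩
  exact ⟨⟨numBelow e a, he ▸ numBelow_lt_card hs has⟩, ha, rfl⟩

lemma disjoint_of_subset_gaps (hα : ↑α ⊆ gaps e) : Disjoint e α :=
  disjoint_right.2 fun _ ha => (hα ha).1

lemma blocks_injOn {e' α' : Finset V} (he : #e = d) (he' : #e' = d) (hα : ↑α ⊆ gaps e)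
    (hα' : ↑α' ⊆ gaps e') (h : blocks d e α = blocks d e' α') : e = e' ∧ α = α' := by
  have hemb : ∀ l, e.orderEmbOfFin he l = e'.orderEmbOfFin he' l := fun l =>
    le_antisymm (le_orderEmbOfFin_of_mem_blocks he' (h ▸ orderEmbOfFin_mem_blocks he l))
      (le_orderEmbOfFin_of_mem_blocks he (h ▸ orderEmbOfFin_mem_blocks he' l))
  have hee' : e = e' := by
    rw [← image_orderEmbOfFin_univ e he, ← image_orderEmbOfFin_univ e' he']
    exact congrArg (univ.image ·) (funext hemb)
  subst hee'
  refine ⟨rfl, ?_⟩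
  rw [← union_sdiff_cancel_left (disjoint_of_subset_gaps hα),
    ← union_sdiff_cancel_left (disjoint_of_subset_gaps hα'),
    ← biUnion_blocks he hα, ← biUnion_blocks he hα', h]

lemma sum_card_blocks_sub_one (he : #e = d) (hα : ↑α ⊆ gaps e) :
    ∑ l, (#(blocks d e α l) - 1) = #α := by
  have hdisj : ∀ l ∈ (univ : Finset (Fin d)), ∀ l' ∈ univ, l ≠ l' →
      Disjoint (blocks d e α l) (blocks d e α l') := fun l _ l' _ hll' =>
    disjoint_left.2 fun a ha ha' =>
      hll' (Fin.ext ((mem_blocks.1 ha).2.symm.trans (mem_blocks.1 ha').2))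
  have hsum : ∑ l, #(blocks d e α l) = d + #α := by
    rw [← card_biUnion hdisj, biUnion_blocks he hα,
      card_union_of_disjoint (disjoint_of_subset_gaps hα), he]
  rw [sum_tsub_distrib _ fun l _ => (blocks_nonempty he l).card_pos, hsum]
  simp

section Maxima

variable {σ : Fin d → Finset V} (hne : ∀ l, (σ l).Nonempty)

lemma sdiff_image_max'_subset_gaps :
    ↑(univ.biUnion σ \ univ.image fun l => (σ l).max' (hne l)) ⊆
      gaps (univ.image fun l => (σ l).max' (hne l)) := by
  intro t ht
  simp only [coe_sdiff, Set.mem_sdiff, mem_coe, mem_biUnion, mem_univ, true_and] at ht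
  obtain ⟨⟨l, htl⟩, hte⟩ := ht
  have hmax := mem_image_of_mem (fun l => (σ l).max' (hne l)) (mem_univ l)
  exact ⟨hte, _, hmax, lt_of_le_of_ne (le_max' _ _ htl) fun h => hte (h ▸ hmax)⟩

variable (hord : ∀ l l' : Fin d, l < l' → ∀ a ∈ σ l, ∀ b ∈ σ l', a < b)
include hord

lemma strictMono_max' : StrictMono fun l => (σ l).max' (hne l) :=
  fun l l' h => hord l l' h _ (max'_mem _ _) _ (max'_mem _ _)

lemma card_image_max' : #(univ.image fun l => (σ l).max' (hne l)) = d := by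
  rw [card_image_of_injective _ (strictMono_max' hne hord).injective, card_univ, Fintype.card_fin]

lemma blocks_image_max' :
    blocks d (univ.image fun l => (σ l).max' (hne l))
      (univ.biUnion σ \ univ.image fun l => (σ l).max' (hne l)) = σ := by
  have hnum : ∀ l, ∀ a ∈ σ l, numBelow (univ.image fun l => (σ l).max' (hne l)) a = l :=
    fun l a ha => numBelow_image (strictMono_max' hne hord)
      (fun l' hl' => hord l' l hl' _ (max'_mem _ _) a ha) (le_max' _ _ ha)
  have hsub : (univ.image fun l => (σ l).max' (hne l)) ⊆ univ.biUnion σ :=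
    image_subset_iff.2 fun l _ => mem_biUnion.2 ⟨l, mem_univ l, max'_mem _ _⟩
  funext l
  ext a
  rw [mem_blocks, union_sdiff_self_eq_union, union_eq_right.2 hsub, mem_biUnion]
  constructor
  · rintro ⟨⟨l', -, ha⟩, hl⟩
    rwa [Fin.ext (hl.symm.trans (hnum l' a ha))]
  · exact fun ha => ⟨⟨l, mem_univ l, ha⟩, hnum l a ha⟩

end Maxima

end Blocks

section Monomials

variable {K : Type*} [Field K] {n : ℕ}

lemma monomial_mem_genIdeal_iff {ms : Set (Fin n →₀ ℕ)} {u : Fin n →₀ ℕ} :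
    monomial u (1 : K) ∈ genIdeal K ms ↔ ∃ v ∈ ms, v ≤ u := by
  rw [genIdeal, mem_ideal_span_monomial_image]
  simp

lemma X_mem_colonJ_iff {k : ℕ} {m : Fin k → (Fin n →₀ ℕ)} {j : Fin k} {t : Fin n} :
    (X t : MvPolynomial (Fin n) K) ∈ colonJ K m j ↔
      ∃ i < j, m i ≤ m j + Finsupp.single t 1 := by
  have hX : (X t : MvPolynomial (Fin n) K) * monomial (m j) 1 =
      monomial (m j + Finsupp.single t 1) 1 := by
    rw [X, monomial_mul, one_mul, add_comm]
  rw [colonJ, Submodule.mem_colon]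
  constructor
  · intro h
    have := h (monomial (m j) 1) (Ideal.subset_span rfl)
    rw [smul_eq_mul, hX, monomial_mem_genIdeal_iff] at this
    obtain ⟨_, ⟨i, hij, rfl⟩, hle⟩ := this
    exact ⟨i, hij, hle⟩
  · rintro ⟨i, hij, hle⟩ p hp
    obtain ⟨q, rfl⟩ := Ideal.mem_span_singleton.1 hp
    rw [smul_eq_mul, ← mul_assoc, hX]
    exact Ideal.mul_mem_right q _ (monomial_mem_genIdeal_iff.2 ⟨m i, ⟨i, hij, rfl⟩, hle⟩)

lemma vecOfEdge_apply (e : Finset (Fin n)) (a : Fin n) :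
    vecOfEdge e a = if a ∈ e then 1 else 0 := by
  simp [vecOfEdge, Finsupp.finsetSum_apply, Finsupp.single_apply]

@[simp]
lemma support_vecOfEdge (e : Finset (Fin n)) : (vecOfEdge e).support = e := by
  ext a
  simp [vecOfEdge_apply]

lemma vecOfEdge_le_vecOfEdge_iff {e e' : Finset (Fin n)} :
    vecOfEdge e ≤ vecOfEdge e' ↔ e ⊆ e' := by
  refine ⟨fun h a ha => ?_, fun h a => ?_⟩
  · have := h a
    simp only [vecOfEdge_apply, ha, if_true] at this
    by_contra ha'
    simp [ha'] at this
  · by_cases ha : a ∈ e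
    · simp [vecOfEdge_apply, ha, h ha]
    · simp [vecOfEdge_apply, ha]

lemma vecOfEdge_union {A B : Finset (Fin n)} (h : Disjoint A B) :
    vecOfEdge (A ∪ B) = vecOfEdge A + vecOfEdge B :=
  sum_union h

lemma vecOfEdge_insert {e : Finset (Fin n)} {t : Fin n} (ht : t ∉ e) :
    vecOfEdge (insert t e) = vecOfEdge e + Finsupp.single t 1 := by
  rw [vecOfEdge, sum_insert ht, add_comm]
  rfl

lemma subset_insert_of_vecOfEdge_le {e e' : Finset (Fin n)} {t : Fin n}
    (h : vecOfEdge e' ≤ vecOfEdge e + Finsupp.single t 1) : e' ⊆ insert t e := by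
  intro a ha
  have := h a
  simp only [Finsupp.add_apply, vecOfEdge_apply, Finsupp.single_apply, ha, if_true] at this
  rw [mem_insert]
  by_contra! hne
  simp [hne.2, Ne.symm hne.1] at this

lemma vecOfFin_eq_vecOfEdge {d : ℕ} {f : Fin d → Fin n} (hf : Function.Injective f) :
    vecOfFin f = vecOfEdge (univ.image f) := by
  rw [vecOfEdge, sum_image fun a _ b _ h => hf h, vecOfFin]

lemma lexGt_iff_toLex_lt {u v : Fin n →₀ ℕ} : lexGt u v ↔ toLex v < toLex u := by
  simp only [lexGt, Finsupp.Lex.lt_iff, ofLex_toLex, eq_comm]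

lemma lexGt_vecOfEdge_iff {e e' : Finset (Fin n)} :
    lexGt (vecOfEdge e) (vecOfEdge e') ↔
      ∃ t, (∀ x < t, x ∈ e ↔ x ∈ e') ∧ t ∈ e ∧ t ∉ e' := by
  simp only [lexGt, vecOfEdge_apply]
  refine exists_congr fun t => and_congr (forall₂_congr fun x _ => ?_) ?_ <;>
    split_ifs <;> simp_all

end Monomials

section Hypergraph

noncomputable def edgeIdeal (K : Type*) [Field K] {n : ℕ} (H : Finset (Finset (Fin n))) :
    Ideal (MvPolynomial (Fin n) K) :=
  genIdeal K (vecOfEdge '' (H : Set (Finset (Fin n))))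

variable {K : Type*} [Field K] {n d : ℕ} {H : Finset (Finset (Fin n))}

lemma card_filter_le_val_add {t : ℕ} (ht : t ≤ d) : t + #{l : Fin d | t ≤ (l : ℕ)} = d := by
  have := card_filter_add_card_filter_not (s := (univ : Finset (Fin d))) (fun l => (l : ℕ) < t)
  simp only [not_lt, Fin.card_filter_val_lt, card_univ, Fintype.card_fin] at this
  omega

lemma monomial_vecOfEdge_mem_edgeIdeal_iff (hH : ∀ e ∈ H, #e = d) {e : Finset (Fin n)}
    (he : #e ≤ d) : monomial (vecOfEdge e) (1 : K) ∈ edgeIdeal K H ↔ e ∈ H := by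
  rw [edgeIdeal, monomial_mem_genIdeal_iff]
  constructor
  · rintro ⟨_, ⟨e', he', rfl⟩, hle⟩
    rwa [← eq_of_subset_of_card_le (vecOfEdge_le_vecOfEdge_iff.1 hle) (he.trans (hH e' he').ge)]
  · exact fun h => ⟨_, ⟨e, h, rfl⟩, le_rfl⟩

variable (hco : CointervalIdeal K d (edgeIdeal K H)) (hH : ∀ e ∈ H, #e = d)
include hco hH

lemma CointervalIdeal.union_mem {f : Fin d → Fin n} (hf : StrictMono f) (he : univ.image f ∈ H)
    {t : ℕ} (ht : t ≤ d) {g : Fin t → Fin n} (hg : StrictMono g)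
    (hle : ∀ s, g s ≤ f (Fin.castLE ht s))
    (hdisj : ∀ s (l : Fin d), t ≤ (l : ℕ) → g s ≠ f l) :
    univ.image g ∪ ({l | t ≤ (l : ℕ)} : Finset (Fin d)).image f ∈ H := by
  set B := ({l | t ≤ (l : ℕ)} : Finset (Fin d)).image f
  have hdisj' : Disjoint (univ.image g) B := by
    simp only [B, disjoint_left, mem_image, mem_univ, true_and, mem_filter]
    rintro _ ⟨s, rfl⟩ ⟨l, hl, h⟩
    exact hdisj s l hl h.symm
  have hcard : #(univ.image g ∪ B) ≤ d :=
    calc _ ≤ #(univ.image g) + #B := card_union_le _ _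
      _ ≤ t + #{l : Fin d | t ≤ (l : ℕ)} :=
        add_le_add (card_image_le.trans_eq (card_fin t)) card_image_le
      _ = d := card_filter_le_val_add ht
  have hmem := hco f hf (by
    rwa [vecOfFin_eq_vecOfEdge hf.injective,
      monomial_vecOfEdge_mem_edgeIdeal_iff hH (card_image_le.trans_eq (card_fin d))])
    t ht g hg hle hdisj
  rwa [← vecOfFin, vecOfFin_eq_vecOfEdge hg.injective,
    ← sum_image (f := fun a => Finsupp.single a 1) fun a _ b _ h => hf.injective h,
    ← vecOfEdge, ← vecOfEdge_union hdisj', monomial_vecOfEdge_mem_edgeIdeal_iff hH hcard]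
    at hmem

lemma CointervalIdeal.image_mem_of_le {e : Finset (Fin n)} (he : e ∈ H) {g : Fin d → Fin n}
    (hg : StrictMono g) (hle : ∀ l, g l ≤ e.orderEmbOfFin (hH e he) l) :
    univ.image g ∈ H := by
  have := hco.union_mem hH (e.orderEmbOfFin (hH e he)).strictMono
    (by rwa [image_orderEmbOfFin_univ]) le_rfl hg hle fun _ l hl => absurd l.2 hl.not_gt
  rwa [filter_false_of_mem fun l _ => not_le.2 l.2, image_empty, union_empty] at this

lemma CointervalIdeal.exists_exchange {e : Finset (Fin n)} (he : e ∈ H) {t s : Fin n}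
    (ht : t ∉ e) (hs : s ∈ e) (hts : t < s) :
    ∃ e' ∈ H, t ∈ e' ∧ e' ⊆ insert t e ∧ ∀ x < t, x ∈ e' ↔ x ∈ e := by
  set f := e.orderEmbOfFin (hH e he)
  set c := numBelow e t
  have hc : c + 1 ≤ d := hH e he ▸ numBelow_lt_card hs hts.le
  set A := insert t (e.filter (· < t))
  have hA : #A = c + 1 := card_insert_of_notMem (by simp [ht])
  have hAt : ∀ a ∈ A, a ≤ t := by
    simp only [A, forall_mem_insert, mem_filter, le_rfl, true_and]
    exact fun a ha => ha.2.le
  have hft : ∀ l : Fin d, c ≤ l → t < f l := fun l hl =>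
    lt_of_le_of_ne (not_lt.1 fun h => ((orderEmbOfFin_lt_iff _).1 h).not_ge hl)
      fun h => ht (h ▸ orderEmbOfFin_mem _ _ _)
  -- Exchange with `(j_1, …, j_{c+1}) = (i_1, …, i_c, t)`, the increasing enumeration of `A`.
  have hmem := hco.union_mem hH f.strictMono (by rwa [image_orderEmbOfFin_univ]) hc
    (A.orderEmbOfFin hA).strictMono
    (orderEmbOfFin_le_of_filter_subset hA (hH e he) hc fun a ha x hx =>
      mem_insert_of_mem (mem_filter.2
        ⟨(mem_filter.1 hx).1, (mem_filter.1 hx).2.trans_le (hAt a ha)⟩))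
    fun s l hl h => (hAt _ (orderEmbOfFin_mem A hA s)).not_gt (h ▸ hft l (by omega))
  rw [image_orderEmbOfFin_univ] at hmem
  refine ⟨_, hmem, mem_union_left _ (mem_insert_self _ _), union_subset ?_ ?_, fun x hx => ?_⟩
  · exact insert_subset_insert _ (filter_subset _ _)
  · exact (image_subset_iff.2 fun l _ => orderEmbOfFin_mem _ _ _).trans (subset_insert _ _)
  · have : x ∉ ({l | c + 1 ≤ (l : ℕ)} : Finset (Fin d)).image f := by
      simp only [mem_image, mem_filter, mem_univ, true_and, not_exists, not_and]
      exact fun l hl h => (hx.trans (hft l (by omega))).ne' h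
    simp only [mem_union, this, or_false, A, mem_insert, hx.ne, false_or, mem_filter, hx,
      and_true]

end Hypergraph

lemma LexDec.strictAnti {n k : ℕ} {m : Fin k → (Fin n →₀ ℕ)} (hlex : LexDec m) :
    StrictAnti (toLex ∘ m) :=
  fun _ _ h => lexGt_iff_toLex_lt.1 (hlex _ _ h)

section Generators

variable {K : Type*} [Field K] {n k d : ℕ} {H : Finset (Finset (Fin n))}
  {m : Fin k → (Fin n →₀ ℕ)}

lemma exists_eq_vecOfEdge (hgens : Set.range m = vecOfEdge '' (H : Set (Finset (Fin n))))
    (j : Fin k) : ∃ e ∈ H, m j = vecOfEdge e := by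
  obtain ⟨e, he, hej⟩ : m j ∈ vecOfEdge '' (H : Set (Finset (Fin n))) :=
    hgens ▸ Set.mem_range_self j
  exact ⟨e, he, hej.symm⟩

lemma support_mem_and_eq_vecOfEdge
    (hgens : Set.range m = vecOfEdge '' (H : Set (Finset (Fin n)))) (j : Fin k) :
    (m j).support ∈ H ∧ m j = vecOfEdge (m j).support := by
  obtain ⟨e, he, hmj⟩ := exists_eq_vecOfEdge hgens j
  rw [hmj, support_vecOfEdge]
  exact ⟨he, rfl⟩

lemma mset_eq_gaps (hH : ∀ e ∈ H, #e = d)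
    (hgens : Set.range m = vecOfEdge '' (H : Set (Finset (Fin n)))) (hlex : LexDec m)
    (hco : CointervalIdeal K d (edgeIdeal K H))
    (j : Fin k) : mset K m j = gaps (m j).support := by
  obtain ⟨e, he, hmj⟩ := exists_eq_vecOfEdge hgens j
  rw [hmj, support_vecOfEdge]
  ext t
  simp only [mset, X_mem_colonJ_iff, hmj]
  constructor
  · rintro ⟨i, hij, hle⟩
    obtain ⟨e', he', hmi⟩ := exists_eq_vecOfEdge hgens i
    have hsub := subset_insert_of_vecOfEdge_le (hmi ▸ hle)
    have hlt := hlex i j hij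
    rw [hmi, hmj, lexGt_vecOfEdge_iff] at hlt
    obtain ⟨w, hagree, hwe', hwe⟩ := hlt
    obtain rfl : w = t := (mem_insert.1 (hsub hwe')).resolve_right hwe
    obtain ⟨s, hs, hse'⟩ : ∃ s ∈ e, s ∉ e' := by
      by_contra! h
      exact hwe (eq_of_subset_of_card_le h (by rw [hH e he, hH e' he']) ▸ hwe')
    refine ⟨hwe, s, hs, lt_of_not_ge fun hsw => hse' ?_⟩
    exact (hagree s (lt_of_le_of_ne hsw fun h => hwe (h ▸ hs))).2 hs
  · rintro ⟨ht, s, hs, hts⟩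
    obtain ⟨e', he', hte', hsub, hagree⟩ := hco.exists_exchange hH he ht hs hts
    obtain ⟨i, hi⟩ : vecOfEdge e' ∈ Set.range m :=
      hgens ▸ Set.mem_image_of_mem vecOfEdge he'
    refine ⟨i, hlex.strictAnti.lt_iff_gt.1 (lexGt_iff_toLex_lt.1 ?_), ?_⟩
    · rw [hi, hmj, lexGt_vecOfEdge_iff]
      exact ⟨t, hagree, hte', ht⟩
    · rwa [hi, ← vecOfEdge_insert ht, vecOfEdge_le_vecOfEdge_iff]

end Generators

theorem stmt15_general (K : Type*) [Field K] {n k d : ℕ}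
    (H : Finset (Finset (Fin n))) (hH : ∀ e ∈ H, e.card = d)
    (m : Fin k → (Fin n →₀ ℕ))
    (hgens : Set.range m = (fun e : Finset (Fin n) => vecOfEdge e) '' ↑H)
    (hlex : LexDec m)
    (hco : CointervalIdeal K d (genIdeal K (Set.range m)))
    (i : ℕ) :
    Set.BijOn (cellOfPair m)
      {p : Fin k × Finset (Fin n) | ↑p.2 ⊆ mset K m p.1 ∧ p.2.card = i - 1}
      {σ : Fin d → Finset (Fin n) |
        (∀ l : Fin d, (σ l).Nonempty) ∧
        (∀ l l' : Fin d, l < l' → ∀ a ∈ σ l, ∀ b ∈ σ l', a < b) ∧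
        (∀ g : Fin d → Fin n, (∀ l : Fin d, g l ∈ σ l) →
          Finset.image g Finset.univ ∈ H) ∧
        (∑ l : Fin d, ((σ l).card - 1)) = i - 1} := by
  rw [hgens] at hco
  have hmset := mset_eq_gaps hH hgens hlex hco
  have hedge := support_mem_and_eq_vecOfEdge hgens
  have hcard : ∀ j, #(m j).support = d := fun j => hH _ (hedge j).1
  -- `cellOfPair m (j, α)` is `blocks d (m j).support α` by definition.
  refine ⟨?_, ?_, ?_⟩
  · rintro ⟨j, α⟩ ⟨hα, hα_card⟩
    rw [hmset] at hα
    refine ⟨blocks_nonempty (hcard j), fun l l' h a ha b hb => lt_of_mem_blocks h ha hb,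
      fun g hg => ?_, (sum_card_blocks_sub_one (hcard j) hα).trans hα_card⟩
    exact hco.image_mem_of_le hH (hedge j).1 (fun l l' h => lt_of_mem_blocks h (hg l) (hg l'))
      fun l => le_orderEmbOfFin_of_mem_blocks _ (hg l)
  · rintro ⟨j, α⟩ ⟨hα, -⟩ ⟨j', α'⟩ ⟨hα', -⟩ h
    rw [hmset] at hα hα'
    obtain ⟨hsupp, rfl⟩ := blocks_injOn (hcard j) (hcard j') hα hα' h
    have hm : m j = m j' := by rw [(hedge j).2, (hedge j').2, hsupp]
    exact Prod.ext (hlex.strictAnti.injective.of_comp (congrArg toLex hm)) rfl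
  · rintro σ ⟨hne, hord, htrans, hdim⟩
    set e := univ.image fun l => (σ l).max' (hne l)
    obtain ⟨j, hj⟩ : vecOfEdge e ∈ Set.range m :=
      hgens ▸ Set.mem_image_of_mem vecOfEdge (htrans _ fun l => max'_mem _ _)
    have hα := sdiff_image_max'_subset_gaps hne
    have hσ := blocks_image_max' hne hord
    refine ⟨(j, univ.biUnion σ \ e), ⟨?_, ?_⟩, ?_⟩
    · rwa [hmset, hj, support_vecOfEdge]
    · rw [← sum_card_blocks_sub_one (card_image_max' hne hord) hα, hσ, hdim]
    · show blocks _ _ _ = σ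
      rw [hj, support_vecOfEdge, hσ]

/-- for a cointerval `d`-graph `H` with edge ideal `I` (generators
ordered lex-decreasing) and fixed `i ≥ 1`, the map `(m,α) ↦ (σ_1,…,σ_d)` is a
bijection from the pairs `(m,α)`, `m ∈ G(I)`, `α ⊆ set(m)`, `|α| = i−1`, onto the
cells of `X_H` of dimension `i−1`. -/
theorem stmt15 (K : Type*) [Field K] {n k d : ℕ} (hd : 0 < d)
    (H : Finset (Finset (Fin n))) (hH : ∀ e ∈ H, e.card = d)
    (m : Fin k → (Fin n →₀ ℕ))
    (hgens : Set.range m = (fun e : Finset (Fin n) => vecOfEdge e) '' ↑H)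
    (hlex : LexDec m)
    (hco : CointervalIdeal K d (genIdeal K (Set.range m)))
    (i : ℕ) (hi : 1 ≤ i) :
    Set.BijOn (cellOfPair m)
      {p : Fin k × Finset (Fin n) | ↑p.2 ⊆ mset K m p.1 ∧ p.2.card = i - 1}
      {σ : Fin d → Finset (Fin n) |
        (∀ l : Fin d, (σ l).Nonempty) ∧
        (∀ l l' : Fin d, l < l' → ∀ a ∈ σ l, ∀ b ∈ σ l', a < b) ∧
        (∀ g : Fin d → Fin n, (∀ l : Fin d, g l ∈ σ l) →
          Finset.image g Finset.univ ∈ H) ∧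
        (∑ l : Fin d, ((σ l).card - 1)) = i - 1} :=
  stmt15_general K H hH m hgens hlex hco i
end

section
/- Let I ⊆ R be a cointerval squarefree monomial ideal generated in degree d with generators ordered lexicographically decreasing, let m = x_{i_1}⋯x_{i_d} ∈ G(I), and suppose s, t ∈ A_ℓ for some 1 ≤ ℓ ≤ d with t > s. Then c(x_s · c(x_t · m)) = c(x_s · m). -/
open MvPolynomial

/-- The map `c`: for a generator `m` and `a ∈ set(m)`, `c(x_a·m) = x_a·m / x_{i_k}`
where `i_k` is the smallest element of `supp(m)` with `a ≤ i_k`. -/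
noncomputable def cFun {n : ℕ} (u : Fin n →₀ ℕ) (a : Fin n) : Fin n →₀ ℕ :=
  if h : (u.support.filter (fun v => a ≤ v)).Nonempty then
    u + Finsupp.single a 1 -
      Finsupp.single ((u.support.filter (fun v => a ≤ v)).min' h) 1
  else u + Finsupp.single a 1

lemma vecOfFin_apply' {n d : ℕ} (f : Fin d → Fin n) (hf : Function.Injective f)
    (a : Fin n) : vecOfFin f a = if ∃ l0 : Fin d, f l0 = a then 1 else 0 := by
  classical
  rw [vecOfFin, Finsupp.finset_sum_apply]
  simp only [Finsupp.single_apply]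
  by_cases h : ∃ l0 : Fin d, f l0 = a
  · obtain ⟨l0, hl0⟩ := h
    rw [if_pos ⟨l0, hl0⟩, Finset.sum_eq_single l0]
    · simp [hl0]
    · intro b _ hb
      rw [if_neg]
      intro hba
      exact hb (hf (hba.trans hl0.symm))
    · simp
  · rw [if_neg h, Finset.sum_eq_zero]
    intro b _
    rw [if_neg]
    exact fun hb => h ⟨b, hb⟩

/-- for a cointerval ideal, a generator `m = x_{i_1}⋯x_{i_d}` and
`s, t ∈ A_ℓ` with `t > s`, one has `c(x_s·c(x_t·m)) = c(x_s·m)`.  Here (0-based `l`)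
`A_ℓ = {a : i_{ℓ−1} < a < i_ℓ and x_{i_1}⋯x_{i_{ℓ−1}}·x_a·x_{i_{ℓ+1}}⋯x_{i_d} ∈ I}`. -/
theorem stmt16 (K : Type*) [Field K] {n k d : ℕ}
    (m : Fin k → (Fin n →₀ ℕ))
    (hsf : ∀ j : Fin k, SqFreeDeg d (m j))
    (hlex : LexDec m)
    (hco : CointervalIdeal K d (genIdeal K (Set.range m)))
    (j : Fin k) (f : Fin d → Fin n) (hf : StrictMono f) (hmj : m j = vecOfFin f)
    (l : Fin d) (s t : Fin n)
    (hs : (∀ l' : Fin d, l' < l → f l' < s) ∧ s < f l ∧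
      MvPolynomial.monomial (vecOfFin (Function.update f l s)) (1 : K) ∈
        genIdeal K (Set.range m))
    (ht : (∀ l' : Fin d, l' < l → f l' < t) ∧ t < f l ∧
      MvPolynomial.monomial (vecOfFin (Function.update f l t)) (1 : K) ∈
        genIdeal K (Set.range m))
    (hst : s < t) :
    cFun (cFun (m j) t) s = cFun (m j) s := by
  classical
  rw [hmj]
  set u := vecOfFin f with hu
  have huapp : ∀ a : Fin n, u a = if ∃ l0 : Fin d, f l0 = a then 1 else 0 :=
    vecOfFin_apply' f hf.injective
  have hsupp : ∀ a : Fin n, a ∈ u.support ↔ ∃ l0 : Fin d, f l0 = a := by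
    intro a
    rw [Finsupp.mem_support_iff, huapp a]
    split_ifs with h <;> simp [h]
  -- u t = 0 and u s = 0 and u (f l) = 1
  have hnt : ¬ ∃ l0 : Fin d, f l0 = t := by
    rintro ⟨l0, hl0⟩
    rcases lt_trichotomy l0 l with h | h | h
    · exact absurd hl0 (ne_of_lt (ht.1 l0 h))
    · subst h; exact absurd hl0 (Ne.symm (ne_of_lt ht.2.1))
    · exact absurd hl0 (Ne.symm (ne_of_lt (lt_trans ht.2.1 (hf h))))
  have hns : ¬ ∃ l0 : Fin d, f l0 = s := by
    rintro ⟨l0, hl0⟩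
    rcases lt_trichotomy l0 l with h | h | h
    · exact absurd hl0 (ne_of_lt (hs.1 l0 h))
    · subst h; exact absurd hl0 (Ne.symm (ne_of_lt hs.2.1))
    · exact absurd hl0 (Ne.symm (ne_of_lt (lt_trans hs.2.1 (hf h))))
  have hut : u t = 0 := by rw [huapp, if_neg hnt]
  have hufl : u (f l) = 1 := by rw [huapp, if_pos ⟨l, rfl⟩]
  have htfl : t ≠ f l := ne_of_lt ht.2.1
  have hsfl : s ≠ f l := ne_of_lt (lt_trans hst ht.2.1)
  have hstne : s ≠ t := ne_of_lt hst
  -- first cFun: min of {v ∈ supp u : t ≤ v} is f l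
  have hne1 : (u.support.filter (fun v => t ≤ v)).Nonempty := by
    refine ⟨f l, Finset.mem_filter.mpr ⟨(hsupp _).mpr ⟨l, rfl⟩, ht.2.1.le⟩⟩
  have hmin1 : (u.support.filter (fun v => t ≤ v)).min' hne1 = f l := by
    apply le_antisymm
    · exact Finset.min'_le _ _ (Finset.mem_filter.mpr ⟨(hsupp _).mpr ⟨l, rfl⟩, ht.2.1.le⟩)
    · apply Finset.le_min'
      intro y hy
      obtain ⟨hy1, hy2⟩ := Finset.mem_filter.mp hy
      obtain ⟨l0, hl0⟩ := (hsupp y).mp hy1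
      subst hl0
      rcases lt_or_ge l0 l with h | h
      · exact absurd hy2 (not_le.mpr (ht.1 l0 h))
      · exact hf.monotone h
  have hC1 : cFun u t = u + Finsupp.single t 1 - Finsupp.single (f l) 1 := by
    rw [cFun, dif_pos hne1, hmin1]
  -- similarly for s directly
  have hne2 : (u.support.filter (fun v => s ≤ v)).Nonempty := by
    refine ⟨f l, Finset.mem_filter.mpr ⟨(hsupp _).mpr ⟨l, rfl⟩, (lt_trans hst ht.2.1).le⟩⟩
  have hmin2 : (u.support.filter (fun v => s ≤ v)).min' hne2 = f l := by
    apply le_antisymm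
    · exact Finset.min'_le _ _
        (Finset.mem_filter.mpr ⟨(hsupp _).mpr ⟨l, rfl⟩, (lt_trans hst ht.2.1).le⟩)
    · apply Finset.le_min'
      intro y hy
      obtain ⟨hy1, hy2⟩ := Finset.mem_filter.mp hy
      obtain ⟨l0, hl0⟩ := (hsupp y).mp hy1
      subst hl0
      rcases lt_or_ge l0 l with h | h
      · exact absurd hy2 (not_le.mpr (hs.1 l0 h))
      · exact hf.monotone h
  have hC2 : cFun u s = u + Finsupp.single s 1 - Finsupp.single (f l) 1 := by
    rw [cFun, dif_pos hne2, hmin2]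
  set w := u + Finsupp.single t 1 - Finsupp.single (f l) 1 with hw
  have hwapp : ∀ a : Fin n,
      w a = u a + (if t = a then 1 else 0) - (if f l = a then 1 else 0) := by
    intro a
    rw [hw, Finsupp.tsub_apply, Finsupp.add_apply, Finsupp.single_apply,
      Finsupp.single_apply]
  have hwt : w t = 1 := by
    rw [hwapp, hut, if_pos rfl, if_neg (Ne.symm htfl)]
  -- min of {v ∈ supp w : s ≤ v} is t
  have hne3 : (w.support.filter (fun v => s ≤ v)).Nonempty := by
    refine ⟨t, Finset.mem_filter.mpr ⟨Finsupp.mem_support_iff.mpr (by rw [hwt]; norm_num),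
      hst.le⟩⟩
  have hmin3 : (w.support.filter (fun v => s ≤ v)).min' hne3 = t := by
    apply le_antisymm
    · exact Finset.min'_le _ _
        (Finset.mem_filter.mpr ⟨Finsupp.mem_support_iff.mpr (by rw [hwt]; norm_num), hst.le⟩)
    · apply Finset.le_min'
      intro y hy
      obtain ⟨hy1, hy2⟩ := Finset.mem_filter.mp hy
      have hyne := Finsupp.mem_support_iff.mp hy1
      by_cases hyt : y = t
      · exact le_of_eq hyt.symm
      · have hwy : w y = u y - (if f l = y then 1 else 0) := by
          rw [hwapp, if_neg (fun h => hyt h.symm), add_zero]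
        by_cases hyfl : y = f l
        · exfalso
          apply hyne
          rw [hwy, hyfl, if_pos rfl, hufl]
          rfl
        · have huy : u y ≠ 0 := by
            intro h0
            apply hyne
            rw [hwy, h0]
            simp
          obtain ⟨l0, hl0⟩ := (hsupp y).mp (Finsupp.mem_support_iff.mpr huy)
          subst hl0
          rcases lt_or_ge l0 l with h | h
          · exact absurd hy2 (not_le.mpr (hs.1 l0 h))
          · have hll0 : l < l0 := lt_of_le_of_ne h (fun h' => hyfl (by rw [← h']))
            exact (lt_trans ht.2.1 (hf hll0)).le
  have hC3 : cFun w s = w + Finsupp.single s 1 - Finsupp.single t 1 := by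
    rw [cFun, dif_pos hne3, hmin3]
  rw [hC1, hC3, hC2]
  ext a
  simp only [Finsupp.tsub_apply, Finsupp.add_apply, hwapp, Finsupp.single_apply]
  rcases eq_or_ne (f l) a with e1 | e1
  · subst e1
    simp [hufl, Ne.symm htfl, Ne.symm hsfl]
  · rcases eq_or_ne t a with e2 | e2
    · subst e2
      simp [hut, e1, Ne.symm hstne]
    · simp [e1, e2]
end
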